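/- arXiv:0808.1191 — 3 statements merged into one kernel-verified Lean document; each statement's English description precedes it below -/
import Mathlib

section
/- Let a, b > 0 be real numbers and define s(ξ) = Γ(a + iξ)/Γ(b + iξ) for ξ ∈ ℝ. Then s is differentiable on ℝ, the series Σ_{m=0}^{∞} (a − b)/((m + a + iξ)(m + b + iξ)) converges absolutely for every ξ ∈ ℝ, and s′(ξ) = s(ξ) · i · Σ_{m=0}^{∞} (a − b)/((m + a + iξ)(m + b + iξ)) for every ξ ∈ ℝ. -/
/-!
With `ψ = Γ'/Γ`, the logarithmic derivative of `s` is `i (ψ(a + iξ) - ψ(b + iξ))`, so everything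
reduces to `ψ(a + w) - ψ(b + w) = ∑ₘ (a - b)/((m + a + w)(m + b + w))` for `Re w > -min a b`.
For real `w` the recurrence `ψ(x + 1) = ψ(x) + 1/x` telescopes the partial sums to
`ψ(u) - ψ(v) - (ψ(u + n) - ψ(v + n))`, and the remainder tends to `0` because `ψ` is increasing
on `(0, ∞)` (`Γ` is log-convex). Both sides are holomorphic in `w` on the half-plane, so the
identity theorem extends the formula from the real axis.
-/

open Filter Topology Set

namespace Complex

lemma ne_neg_natCast_of_re_pos {s : ℂ} (hs : 0 < s.re) (m : ℕ) : s ≠ -m := by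
  rintro rfl
  simp only [neg_re, natCast_re] at hs
  linarith [(Nat.cast_nonneg m : (0 : ℝ) ≤ m)]

lemma digamma_ofReal {x : ℝ} (hx : 0 < x) : digamma x = ((logDeriv Real.Gamma x : ℝ) : ℂ) := by
  have hdiff : DifferentiableAt ℂ Gamma x :=
    differentiableAt_Gamma _ (ne_neg_natCast_of_re_pos (by simpa using hx))
  have hreal : HasDerivAt (fun y : ℝ => (Real.Gamma y : ℂ)) ((deriv Real.Gamma x : ℝ) : ℂ) x :=
    (Real.differentiableOn_Gamma_Ioi.differentiableAt (Ioi_mem_nhds hx)).hasDerivAt.ofReal_comp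
  have hcomp := hdiff.hasDerivAt.comp_ofReal
  simp only [Gamma_ofReal] at hcomp
  rw [digamma_def, logDeriv_apply, logDeriv_apply, hcomp.unique hreal, Gamma_ofReal, ofReal_div]

end Complex

namespace Real

lemma logDeriv_Gamma_add_one {x : ℝ} (hx : 0 < x) :
    logDeriv Gamma (x + 1) = logDeriv Gamma x + x⁻¹ := by
  have h := Complex.digamma_apply_add_one x (Complex.ne_neg_natCast_of_re_pos (by simpa using hx))
  rw [← Complex.ofReal_one, ← Complex.ofReal_add, Complex.digamma_ofReal (by positivity),
    Complex.digamma_ofReal hx] at h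
  exact_mod_cast h

lemma logDeriv_Gamma_add_nat {x : ℝ} (hx : 0 < x) (n : ℕ) :
    logDeriv Gamma (x + n) = logDeriv Gamma x + ∑ m ∈ Finset.range n, (m + x)⁻¹ := by
  induction n with
  | zero => simp
  | succ n ih =>
    rw [Nat.cast_succ, ← add_assoc, logDeriv_Gamma_add_one (by positivity), ih,
      Finset.sum_range_succ, add_comm x]
    ring

lemma monotoneOn_logDeriv_Gamma : MonotoneOn (logDeriv Gamma) (Ioi 0) := by
  have hdiff : ∀ x ∈ Ioi (0 : ℝ), DifferentiableAt ℝ Gamma x := fun x hx =>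
    differentiableOn_Gamma_Ioi.differentiableAt (Ioi_mem_nhds hx)
  refine (convexOn_log_Gamma.monotoneOn_deriv fun x hx =>
    (hdiff x hx).log (Gamma_pos_of_pos hx).ne').congr fun x hx => ?_
  exact deriv_log_comp_eq_logDeriv (hdiff x hx) (Gamma_pos_of_pos hx).ne'

lemma tendsto_logDeriv_Gamma_add_nat_sub {u v : ℝ} (hv : 0 < v) (hvu : v ≤ u) :
    Tendsto (fun n : ℕ => logDeriv Gamma (u + n) - logDeriv Gamma (v + n)) atTop (𝓝 0) := by
  -- `ψ(v + n) ≤ ψ(u + n) ≤ ψ(v + n + k)` and the recurrence bounds the gap by `k / (v + n)`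
  set k := ⌈u - v⌉₊
  have hbound (n : ℕ) : logDeriv Gamma (u + n) - logDeriv Gamma (v + n) ≤ k / (v + n) := by
    have hvn : 0 < v + n := by positivity
    have hmono : logDeriv Gamma (u + n) ≤ logDeriv Gamma (v + n + k) :=
      monotoneOn_logDeriv_Gamma (by simp only [mem_Ioi]; linarith)
        (by simp only [mem_Ioi]; positivity) (by linarith [Nat.le_ceil (u - v)])
    have hsum : ∑ m ∈ Finset.range k, (m + (v + n))⁻¹ ≤ k / (v + n) := by
      calc ∑ m ∈ Finset.range k, (m + (v + n))⁻¹ ≤ ∑ m ∈ Finset.range k, (v + n)⁻¹ :=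
            Finset.sum_le_sum fun m _ => inv_anti₀ hvn (by linarith [m.cast_nonneg (α := ℝ)])
        _ = k / (v + n) := by simp [div_eq_mul_inv]
    rw [logDeriv_Gamma_add_nat hvn] at hmono
    linarith
  have hnonneg (n : ℕ) : 0 ≤ logDeriv Gamma (u + n) - logDeriv Gamma (v + n) :=
    sub_nonneg.mpr <| monotoneOn_logDeriv_Gamma (by simp only [mem_Ioi]; positivity)
      (by simp only [mem_Ioi]; linarith [n.cast_nonneg (α := ℝ)]) (by linarith)
  refine squeeze_zero hnonneg hbound ?_
  exact (tendsto_atTop_add_const_left _ v tendsto_natCast_atTop_atTop).const_div_atTop _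

lemma hasSum_logDeriv_Gamma_sub_of_le {u v : ℝ} (hv : 0 < v) (hvu : v ≤ u) :
    HasSum (fun m : ℕ => (u - v) / ((m + u) * (m + v))) (logDeriv Gamma u - logDeriv Gamma v) := by
  have hu : 0 < u := hv.trans_le hvu
  refine (hasSum_iff_tendsto_nat_of_nonneg (fun m => by positivity) _).mpr ?_
  have hpartial (n : ℕ) : ∑ m ∈ Finset.range n, (u - v) / ((m + u) * (m + v)) =
      logDeriv Gamma u - logDeriv Gamma v - (logDeriv Gamma (u + n) - logDeriv Gamma (v + n)) := by
    have hterm (m : ℕ) : (u - v) / ((m + u) * (m + v)) = (m + v)⁻¹ - (m + u)⁻¹ := by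
      field_simp; ring
    simp only [hterm, Finset.sum_sub_distrib, logDeriv_Gamma_add_nat hu, logDeriv_Gamma_add_nat hv]
    ring
  simp only [hpartial]
  simpa using
    (tendsto_logDeriv_Gamma_add_nat_sub hv hvu).const_sub (logDeriv Gamma u - logDeriv Gamma v)

lemma hasSum_logDeriv_Gamma_sub {u v : ℝ} (hu : 0 < u) (hv : 0 < v) :
    HasSum (fun m : ℕ => (u - v) / ((m + u) * (m + v))) (logDeriv Gamma u - logDeriv Gamma v) := by
  rcases le_total v u with hvu | huv
  · exact hasSum_logDeriv_Gamma_sub_of_le hv hvu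
  · have h := (hasSum_logDeriv_Gamma_sub_of_le hu huv).neg
    simp only [← neg_div, neg_sub, mul_comm (_ + v)] at h
    exact h

end Real

lemma summable_inv_natCast_add_sq (ε : ℝ) : Summable fun m : ℕ => ((m + ε) ^ 2)⁻¹ :=
  ((Real.summable_one_div_nat_add_rpow ε 2).mpr one_lt_two).congr fun m => by
    rw [Real.rpow_two, sq_abs, one_div]

namespace Complex

lemma natCast_add_ne_zero_of_re_pos {z : ℂ} (hz : 0 < z.re) (m : ℕ) : (m : ℂ) + z ≠ 0 :=
  fun h => ne_neg_natCast_of_re_pos hz m (eq_neg_of_add_eq_zero_right h)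

lemma norm_div_natCast_add_mul_le {c z₁ z₂ : ℂ} {ε : ℝ} (hε : 0 < ε) (h₁ : ε ≤ z₁.re)
    (h₂ : ε ≤ z₂.re) (m : ℕ) : ‖c / ((m + z₁) * (m + z₂))‖ ≤ ‖c‖ * ((m + ε) ^ 2)⁻¹ := by
  have hle (z : ℂ) (hz : ε ≤ z.re) : m + ε ≤ ‖(m : ℂ) + z‖ :=
    calc (m : ℝ) + ε ≤ ((m : ℂ) + z).re := by simpa using hz
      _ ≤ ‖(m : ℂ) + z‖ := re_le_norm _
  rw [norm_div, norm_mul, div_eq_mul_inv, sq]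
  gcongr
  exacts [hle z₁ h₁, hle z₂ h₂]

lemma summable_norm_div_natCast_add_mul (c : ℂ) {z₁ z₂ : ℂ} (h₁ : 0 < z₁.re) (h₂ : 0 < z₂.re) :
    Summable fun m : ℕ => ‖c / ((m + z₁) * (m + z₂))‖ :=
  .of_nonneg_of_le (fun _ => norm_nonneg _)
    (norm_div_natCast_add_mul_le (lt_min h₁ h₂) (min_le_left _ _) (min_le_right _ _))
    ((summable_inv_natCast_add_sq _).mul_left _)

lemma differentiableOn_tsum_div_natCast_add_mul (a b : ℝ) :
    DifferentiableOn ℂ (fun w : ℂ => ∑' m : ℕ, ((a : ℂ) - b) / ((m + a + w) * (m + b + w)))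
      {w | -min a b < w.re} := by
  intro w₀ (hw₀ : -min a b < w₀.re)
  set ε := (w₀.re + min a b) / 2 with hε
  have hε_pos : 0 < ε := by linarith
  set U := {w : ℂ | ε - min a b < w.re}
  have hU : IsOpen U := isOpen_lt continuous_const continuous_re
  have hre {w : ℂ} (hw : w ∈ U) (c : ℝ) (hc : min a b ≤ c) : ε ≤ ((c : ℂ) + w).re := by
    have : ε - min a b < w.re := hw
    simp only [add_re, ofReal_re]; linarith
  have hw₀U : w₀ ∈ U := show ε - min a b < w₀.re by linarith
  refine (DifferentiableOn.differentiableAt ?_ (hU.mem_nhds hw₀U)).differentiableWithinAt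
  refine differentiableOn_tsum_of_summable_norm
    ((summable_inv_natCast_add_sq ε).mul_left ‖(a : ℂ) - b‖) (fun m => ?_) hU fun m w hw => ?_
  · refine (differentiableOn_const _).div (by fun_prop) fun w hw => ?_
    rw [add_assoc, add_assoc]
    exact mul_ne_zero
      (natCast_add_ne_zero_of_re_pos (hε_pos.trans_le (hre hw a (min_le_left _ _))) m)
      (natCast_add_ne_zero_of_re_pos (hε_pos.trans_le (hre hw b (min_le_right _ _))) m)
  · simp only [add_assoc]
    exact norm_div_natCast_add_mul_le hε_pos (hre hw a (min_le_left _ _))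
      (hre hw b (min_le_right _ _)) m

lemma analyticOnNhd_digamma : AnalyticOnNhd ℂ digamma {s | 0 < s.re} := by
  have hopen : IsOpen {s : ℂ | 0 < s.re} := isOpen_lt continuous_const continuous_re
  have hGamma : AnalyticOnNhd ℂ Gamma {s | 0 < s.re} :=
    DifferentiableOn.analyticOnNhd (fun s hs => (differentiableAt_Gamma s
      (ne_neg_natCast_of_re_pos hs)).differentiableWithinAt) hopen
  exact hGamma.deriv.div hGamma fun s hs => Gamma_ne_zero_of_re_pos hs

lemma eqOn_of_forall_ofReal_eq {f g : ℂ → ℂ} {U : Set ℂ} (hf : AnalyticOnNhd ℂ f U)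
    (hg : AnalyticOnNhd ℂ g U) (hU : IsPreconnected U) (hUo : IsOpen U) {x₀ : ℝ}
    (hx₀ : (x₀ : ℂ) ∈ U) (hfg : ∀ x : ℝ, (x : ℂ) ∈ U → f x = g x) : EqOn f g U := by
  refine hf.eqOn_of_preconnected_of_frequently_eq hg hU hx₀ ?_
  have hofReal : Tendsto ((↑) : ℝ → ℂ) (𝓝[≠] x₀) (𝓝[≠] (x₀ : ℂ)) :=
    continuous_ofReal.continuousWithinAt.tendsto_nhdsWithin fun _ h => by simpa using h
  have hmem : ∀ᶠ x : ℝ in 𝓝[≠] x₀, (x : ℂ) ∈ U :=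
    nhdsWithin_le_nhds (continuous_ofReal.continuousAt.preimage_mem_nhds (hUo.mem_nhds hx₀))
  exact hofReal.frequently (hmem.mono hfg).frequently

lemma digamma_add_sub_digamma_add {a b : ℝ} (ha : 0 < a) (hb : 0 < b) {w : ℂ}
    (hw : -min a b < w.re) :
    digamma (a + w) - digamma (b + w) = ∑' m : ℕ, ((a : ℂ) - b) / ((m + a + w) * (m + b + w)) := by
  set U := {w : ℂ | -min a b < w.re}
  have hUo : IsOpen U := isOpen_lt continuous_const continuous_re
  have hshift (c : ℝ) (hc : min a b ≤ c) : AnalyticOnNhd ℂ (fun w => digamma (c + w)) U :=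
    analyticOnNhd_digamma.comp (fun _ _ => analyticAt_const.add analyticAt_id)
      fun w (hw : -min a b < w.re) => show 0 < ((c : ℂ) + w).re by
        simp only [add_re, ofReal_re]; linarith
  refine eqOn_of_forall_ofReal_eq ((hshift a (min_le_left _ _)).sub (hshift b (min_le_right _ _)))
    ((differentiableOn_tsum_div_natCast_add_mul a b).analyticOnNhd hUo)
    (convex_halfSpace_re_gt _).isPreconnected hUo (x₀ := 0) (by simp [U, lt_min ha hb]) ?_ hw
  intro x (hx : -min a b < (x : ℂ).re)
  simp only [ofReal_re] at hx
  show digamma (a + x) - digamma (b + x) = _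
  have hax : 0 < a + x := by linarith [min_le_left a b]
  have hbx : 0 < b + x := by linarith [min_le_right a b]
  rw [← ofReal_add, ← ofReal_add, digamma_ofReal hax, digamma_ofReal hbx,
    ← ofReal_sub, ← (Real.hasSum_logDeriv_Gamma_sub hax hbx).tsum_eq, ofReal_tsum]
  congr 1 with m
  push_cast
  ring

lemma hasDerivAt_Gamma_add_div_Gamma_add {α β w : ℂ} (hα : ∀ m : ℕ, α + w ≠ -m)
    (hβ : ∀ m : ℕ, β + w ≠ -m) :
    HasDerivAt (fun w => Gamma (α + w) / Gamma (β + w))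
      (Gamma (α + w) / Gamma (β + w) * (digamma (α + w) - digamma (β + w))) w := by
  have hshift (γ : ℂ) (hγ : ∀ m : ℕ, γ + w ≠ -m) :
      HasDerivAt (fun w => Gamma (γ + w)) (deriv Gamma (γ + w)) w :=
    .comp_const_add γ w (differentiableAt_Gamma _ hγ).hasDerivAt
  refine ((hshift α hα).div (hshift β hβ) (Gamma_ne_zero hβ)).congr_deriv ?_
  rw [digamma_def, logDeriv_apply, logDeriv_apply]
  field_simp [Gamma_ne_zero hα, Gamma_ne_zero hβ]

end Complex

/-- For real `a, b > 0`, the function `s(ξ) = Γ(a + iξ)/Γ(b + iξ)` is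
differentiable on `ℝ`, the series `Σ_{m≥0} (a - b)/((m + a + iξ)(m + b + iξ))` converges
absolutely for every `ξ`, and
`s′(ξ) = s(ξ) · i · Σ_{m≥0} (a - b)/((m + a + iξ)(m + b + iξ))`. -/
theorem gamma_ratio_deriv (a b : ℝ) (ha : 0 < a) (hb : 0 < b)
    (s : ℝ → ℂ)
    (hs : ∀ ξ : ℝ, s ξ =
      Complex.Gamma ((a : ℂ) + ξ * Complex.I) / Complex.Gamma ((b : ℂ) + ξ * Complex.I)) :
    (∀ ξ : ℝ, DifferentiableAt ℝ s ξ) ∧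
    (∀ ξ : ℝ, Summable (fun m : ℕ =>
      ‖((a : ℂ) - (b : ℂ)) /
        (((m : ℂ) + a + ξ * Complex.I) * ((m : ℂ) + b + ξ * Complex.I))‖)) ∧
    (∀ ξ : ℝ, deriv s ξ =
      s ξ * (Complex.I * ∑' m : ℕ, ((a : ℂ) - (b : ℂ)) /
        (((m : ℂ) + a + ξ * Complex.I) * ((m : ℂ) + b + ξ * Complex.I)))) := by
  open Complex in
  have hre (c : ℝ) (hc : 0 < c) (ξ : ℝ) : 0 < ((c : ℂ) + ξ * I).re := by simpa using hc
  have hderiv (ξ : ℝ) : HasDerivAt s (s ξ * (I * ∑' m : ℕ, ((a : ℂ) - b) /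
      ((m + a + ξ * I) * (m + b + ξ * I)))) ξ := by
    have hF := hasDerivAt_Gamma_add_div_Gamma_add (ne_neg_natCast_of_re_pos (hre a ha ξ))
      (ne_neg_natCast_of_re_pos (hre b hb ξ))
    rw [digamma_add_sub_digamma_add ha hb (by simpa using lt_min ha hb)] at hF
    have := (hF.comp (ξ : ℂ) ((hasDerivAt_id _).mul_const I)).comp_ofReal
    simp only [id, one_mul] at this
    rw [hs ξ, funext hs]
    exact this.congr_deriv (by ring)
  refine ⟨fun ξ => (hderiv ξ).differentiableAt, fun ξ => ?_, fun ξ => (hderiv ξ).deriv⟩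
  simpa only [add_assoc] using
    summable_norm_div_natCast_add_mul ((a : ℂ) - b) (hre a ha ξ) (hre b hb ξ)
end

section
/- Let a, b > 0 be real numbers and define t(ξ) = i · Σ_{m=0}^{∞} (a − b)/((m + a + iξ)(m + b + iξ)) for ξ ∈ ℝ. Then t is a smooth (infinitely differentiable) function on ℝ and is a symbol of order −1: for every k ∈ ℕ there exists a constant C_k > 0 such that |t^{(k)}(ξ)| ≤ C_k (1 + ξ²)^{−(1+k)/2} for all ξ ∈ ℝ. -/
open Complex

noncomputable section
namespace GammaSym

/-- `w c m ξ = m + c + ξ i`. -/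
def wf (c : ℝ) (m : ℕ) (ξ : ℝ) : ℂ := (m : ℂ) + c + ξ * I

lemma wf_re (c : ℝ) (m : ℕ) (ξ : ℝ) : (wf c m ξ).re = m + c := by
  simp [wf]

lemma wf_im (c : ℝ) (m : ℕ) (ξ : ℝ) : (wf c m ξ).im = ξ := by
  simp [wf]

lemma wf_ne_zero {c : ℝ} (hc : 0 < c) (m : ℕ) (ξ : ℝ) : wf c m ξ ≠ 0 := by
  intro h
  have := wf_re c m ξ
  rw [h] at this
  simp at this
  have : (0:ℝ) ≤ m := Nat.cast_nonneg m
  linarith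

lemma norm_wf_ge {c : ℝ} (hc : 0 < c) (m : ℕ) (ξ : ℝ) : (m : ℝ) + c ≤ ‖wf c m ξ‖ := by
  have h := Complex.abs_re_le_norm (wf c m ξ)
  rw [wf_re] at h
  have : (0:ℝ) ≤ (m:ℝ) + c := by positivity
  calc (m:ℝ) + c = |(m:ℝ) + c| := (_root_.abs_of_nonneg this).symm
    _ ≤ ‖wf c m ξ‖ := h
    _ = ‖wf c m ξ‖ := rfl

lemma sq_norm_wf (c : ℝ) (m : ℕ) (ξ : ℝ) : ‖wf c m ξ‖ ^ 2 = ((m:ℝ) + c) ^ 2 + ξ ^ 2 := by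
  rw [Complex.sq_norm, Complex.normSq_apply, wf_re, wf_im]
  ring

/-- Lower bound for `‖w‖` capturing both the `m` and `ξ` growth. -/
lemma norm_wf_ge' {c c₁ : ℝ} (hc₁ : 0 < c₁) (hc₁1 : c₁ ≤ 1) (hcc : c₁ ≤ c) (m : ℕ) (ξ : ℝ) :
    c₁ / 5 * ((m : ℝ) + 1 + Real.sqrt (1 + ξ ^ 2)) ≤ ‖wf c m ξ‖ := by
  set u := Real.sqrt (1 + ξ ^ 2) with hu
  have hu2 : u ^ 2 = 1 + ξ ^ 2 := Real.sq_sqrt (by positivity)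
  have hu1 : 1 ≤ u := by
    have h := Real.sqrt_le_sqrt (show (1:ℝ) ≤ 1 + ξ ^ 2 by nlinarith [sq_nonneg ξ])
    rwa [Real.sqrt_one] at h
  have hm : (0:ℝ) ≤ m := Nat.cast_nonneg m
  have habs : u ≤ 1 + |ξ| := by
    rw [hu]
    have : 1 + ξ ^ 2 ≤ (1 + |ξ|) ^ 2 := by nlinarith [abs_nonneg ξ, _root_.sq_abs ξ]
    calc Real.sqrt (1 + ξ ^ 2) ≤ Real.sqrt ((1 + |ξ|) ^ 2) := Real.sqrt_le_sqrt this
      _ = 1 + |ξ| := Real.sqrt_sq (by positivity)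
  have hsq : (c₁ / 5 * ((m : ℝ) + 1 + u)) ^ 2 ≤ ‖wf c m ξ‖ ^ 2 := by
    rw [sq_norm_wf]
    have h1 : |ξ| ^ 2 = ξ ^ 2 := _root_.sq_abs ξ
    have step1 : c₁ * ((m:ℝ) + 1 + u) ≤ 3 * ((m:ℝ) + c₁ + |ξ|) := by
      nlinarith [abs_nonneg ξ, mul_nonneg (le_of_lt hc₁) (abs_nonneg ξ),
        mul_nonneg (le_of_lt hc₁) hm]
    have step2 : ((m:ℝ) + c₁ + |ξ|) ^ 2 ≤ 2 * (((m:ℝ) + c) ^ 2 + ξ ^ 2) := by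
      nlinarith [sq_nonneg ((m:ℝ) + c₁ - |ξ|), sq_nonneg ((m:ℝ) + c₁ + |ξ|)]
    have h3 : (0:ℝ) ≤ (m:ℝ) + c₁ + |ξ| := by positivity
    have h4 : (0:ℝ) ≤ c₁ * ((m:ℝ) + 1 + u) := by positivity
    nlinarith [mul_le_mul step1 step1 h4 (by positivity), step2]
  have h0 : (0:ℝ) ≤ c₁ / 5 * ((m : ℝ) + 1 + u) := by positivity
  nlinarith [norm_nonneg (wf c m ξ)]


/-- `F c m k ξ = (-i)^k k! (m+c+ξi)^{-(k+1)}`, the `k`-th derivative of `ξ ↦ (m+c+ξi)⁻¹`. -/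
def Ff (c : ℝ) (m : ℕ) (k : ℕ) (ξ : ℝ) : ℂ :=
  (-I) ^ k * (k.factorial : ℂ) * ((wf c m ξ) ^ (k + 1))⁻¹

/-- The summand of `t` (after partial fractions) and its derivatives. -/
def Gf (a b : ℝ) (m : ℕ) (k : ℕ) (ξ : ℝ) : ℂ := I * (Ff b m k ξ - Ff a m k ξ)

lemma hasDerivAt_Ff {c : ℝ} (hc : 0 < c) (m : ℕ) (k : ℕ) (ξ : ℝ) :
    HasDerivAt (Ff c m k) (Ff c m (k + 1) ξ) ξ := by
  have hw : wf c m ξ ≠ 0 := wf_ne_zero hc m ξ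
  -- work with the complex version and restrict to the reals
  set wc : ℂ → ℂ := fun z => (m : ℂ) + c + z * I with hwc
  have hwcd : ∀ z : ℂ, HasDerivAt wc I z := fun z => by
    simpa [hwc] using ((hasDerivAt_id z).mul_const I).const_add ((m : ℂ) + c)
  have hwr : wc (ξ : ℂ) = wf c m ξ := rfl
  have hpow : HasDerivAt (fun z : ℂ => (wc z) ^ (k + 1))
      ((k + 1 : ℕ) * (wc (ξ : ℂ)) ^ k * I) (ξ : ℂ) := by
    simpa using (hwcd (ξ : ℂ)).fun_pow (k + 1)
  have hwne : wc (ξ : ℂ) ≠ 0 := by rw [hwr]; exact hw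
  have hinv := hpow.fun_inv (pow_ne_zero _ hwne)
  have h := hinv.const_mul ((-I) ^ k * (k.factorial : ℂ))
  have h2 := h.comp_ofReal
  convert h2 using 1
  · rfl
  rw [Ff, ← hwr, Nat.factorial_succ]
  push_cast
  field_simp
  ring

lemma contDiff_Ff {c : ℝ} (hc : 0 < c) (m : ℕ) (k : ℕ) : ContDiff ℝ (⊤ : ℕ∞) (Ff c m k) := by
  apply ContDiff.mul contDiff_const
  apply ContDiff.inv
  · apply ContDiff.pow
    have : ContDiff ℝ (⊤ : ℕ∞) (fun ξ : ℝ => wf c m ξ) := by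
      apply ContDiff.add
      · exact contDiff_const
      · exact (Complex.ofRealCLM.contDiff).mul contDiff_const
    exact this
  · exact fun ξ => pow_ne_zero _ (wf_ne_zero hc m ξ)

lemma contDiff_Gf {a b : ℝ} (ha : 0 < a) (hb : 0 < b) (m : ℕ) (k : ℕ) :
    ContDiff ℝ (⊤ : ℕ∞) (Gf a b m k) :=
  contDiff_const.mul ((contDiff_Ff hb m k).sub (contDiff_Ff ha m k))

lemma hasDerivAt_Gf {a b : ℝ} (ha : 0 < a) (hb : 0 < b) (m : ℕ) (k : ℕ) (ξ : ℝ) :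
    HasDerivAt (Gf a b m k) (Gf a b m (k + 1) ξ) ξ :=
  ((hasDerivAt_Ff hb m k ξ).sub (hasDerivAt_Ff ha m k ξ)).const_mul I

lemma deriv_Gf {a b : ℝ} (ha : 0 < a) (hb : 0 < b) (m : ℕ) (k : ℕ) :
    deriv (Gf a b m k) = Gf a b m (k + 1) := by
  funext ξ; exact (hasDerivAt_Gf ha hb m k ξ).deriv

lemma iteratedDeriv_Gf {a b : ℝ} (ha : 0 < a) (hb : 0 < b) (m : ℕ) (n : ℕ) :
    iteratedDeriv n (Gf a b m 0) = Gf a b m n := by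
  induction n with
  | zero => simp
  | succ n ih =>
      rw [iteratedDeriv_succ, ih, deriv_Gf ha hb]


/-- Difference of inverse powers bound. -/
lemma norm_inv_pow_sub {w₁ w₂ : ℂ} {M : ℝ} (hM : 0 < M) (h1 : M ≤ ‖w₁‖) (h2 : M ≤ ‖w₂‖) :
    ∀ n : ℕ, ‖(w₂ ^ n)⁻¹ - (w₁ ^ n)⁻¹‖ ≤ n * ‖w₁ - w₂‖ / M ^ (n + 1)
  | 0 => by simp
  | n + 1 => by
    have hw1 : w₁ ≠ 0 := by
      intro h; rw [h] at h1; simp at h1; linarith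
    have hw2 : w₂ ≠ 0 := by
      intro h; rw [h] at h2; simp at h2; linarith
    have key : (w₂ ^ (n + 1))⁻¹ - (w₁ ^ (n + 1))⁻¹
        = w₂⁻¹ * ((w₂ ^ n)⁻¹ - (w₁ ^ n)⁻¹) + (w₁ ^ n)⁻¹ * (w₂⁻¹ - w₁⁻¹) := by
      rw [pow_succ w₂ n, pow_succ w₁ n, mul_inv, mul_inv]
      ring
    have hd : ‖w₂⁻¹ - w₁⁻¹‖ ≤ ‖w₁ - w₂‖ / M ^ 2 := by
      have : w₂⁻¹ - w₁⁻¹ = (w₁ - w₂) * (w₁⁻¹ * w₂⁻¹) := by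
        rw [inv_sub_inv hw2 hw1, div_eq_mul_inv, mul_inv]
        ring
      rw [this, norm_mul, norm_mul, norm_inv, norm_inv]
      have hn1 : (0:ℝ) < ‖w₁‖ := lt_of_lt_of_le hM h1
      have hn2 : (0:ℝ) < ‖w₂‖ := lt_of_lt_of_le hM h2
      have : ‖w₁‖⁻¹ * ‖w₂‖⁻¹ ≤ (M ^ 2)⁻¹ := by
        rw [← mul_inv]
        apply inv_anti₀ (by positivity)
        calc M ^ 2 = M * M := sq M
          _ ≤ ‖w₁‖ * ‖w₂‖ := by
            apply mul_le_mul h1 h2 (le_of_lt hM) (le_of_lt hn1)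
      calc ‖w₁ - w₂‖ * (‖w₁‖⁻¹ * ‖w₂‖⁻¹) ≤ ‖w₁ - w₂‖ * (M ^ 2)⁻¹ :=
            mul_le_mul_of_nonneg_left this (norm_nonneg _)
        _ = ‖w₁ - w₂‖ / M ^ 2 := by rw [div_eq_mul_inv]
    have ih := norm_inv_pow_sub hM h1 h2 n
    have hb1 : ‖w₂⁻¹‖ ≤ M⁻¹ := by
      rw [norm_inv]
      exact inv_anti₀ hM h2
    have hb2 : ‖(w₁ ^ n)⁻¹‖ ≤ (M ^ n)⁻¹ := by
      rw [norm_inv, norm_pow]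
      apply inv_anti₀ (by positivity)
      exact pow_le_pow_left₀ (le_of_lt hM) h1 n
    calc ‖(w₂ ^ (n + 1))⁻¹ - (w₁ ^ (n + 1))⁻¹‖
        ≤ ‖w₂⁻¹ * ((w₂ ^ n)⁻¹ - (w₁ ^ n)⁻¹)‖ + ‖(w₁ ^ n)⁻¹ * (w₂⁻¹ - w₁⁻¹)‖ := by
          rw [key]; exact norm_add_le _ _
      _ = ‖w₂⁻¹‖ * ‖(w₂ ^ n)⁻¹ - (w₁ ^ n)⁻¹‖ + ‖(w₁ ^ n)⁻¹‖ * ‖w₂⁻¹ - w₁⁻¹‖ := by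
          rw [norm_mul, norm_mul]
      _ ≤ M⁻¹ * (n * ‖w₁ - w₂‖ / M ^ (n + 1)) + (M ^ n)⁻¹ * (‖w₁ - w₂‖ / M ^ 2) := by
          apply add_le_add
          · exact mul_le_mul hb1 ih (norm_nonneg _) (by positivity)
          · exact mul_le_mul hb2 hd (norm_nonneg _) (by positivity)
      _ = ((n : ℝ) + 1) * ‖w₁ - w₂‖ / M ^ (n + 1 + 1) := by
          field_simp
          ring
      _ = ((n + 1 : ℕ) : ℝ) * ‖w₁ - w₂‖ / M ^ (n + 1 + 1) := by push_cast; ring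

/-- Pointwise bound for `Gf` with decay in both `m` and `ξ`. -/
lemma norm_Gf_le {a b c₁ : ℝ} (hc₁ : 0 < c₁) (hc₁1 : c₁ ≤ 1) (hca : c₁ ≤ a) (hcb : c₁ ≤ b)
    (m : ℕ) (k : ℕ) (ξ : ℝ) :
    ‖Gf a b m k ξ‖ ≤ (k.factorial : ℝ) * (k + 1) * |a - b| *
      ((c₁ / 5 * ((m : ℝ) + 1 + Real.sqrt (1 + ξ ^ 2))) ^ (k + 2))⁻¹ := by
  have ha : 0 < a := lt_of_lt_of_le hc₁ hca
  have hb : 0 < b := lt_of_lt_of_le hc₁ hcb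
  set M : ℝ := c₁ / 5 * ((m : ℝ) + 1 + Real.sqrt (1 + ξ ^ 2)) with hM
  have hMpos : 0 < M := by
    have : (0:ℝ) < Real.sqrt (1 + ξ ^ 2) := Real.sqrt_pos.mpr (by positivity)
    positivity
  have h1 : M ≤ ‖wf a m ξ‖ := norm_wf_ge' hc₁ hc₁1 hca m ξ
  have h2 : M ≤ ‖wf b m ξ‖ := norm_wf_ge' hc₁ hc₁1 hcb m ξ
  have hsub : wf a m ξ - wf b m ξ = (a : ℂ) - (b : ℂ) := by
    simp only [wf]; ring
  have hnormsub : ‖wf a m ξ - wf b m ξ‖ = |a - b| := by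
    rw [hsub, ← Complex.ofReal_sub, Complex.norm_real, Real.norm_eq_abs]
  have key := norm_inv_pow_sub hMpos h1 h2 (k + 1)
  rw [hnormsub] at key
  push_cast at key
  have : ‖Gf a b m k ξ‖ = (k.factorial : ℝ) * ‖(wf b m ξ ^ (k + 1))⁻¹ - (wf a m ξ ^ (k + 1))⁻¹‖ := by
    rw [Gf, norm_mul, Complex.norm_I, one_mul, Ff, Ff]
    rw [show ((-I) ^ k * (k.factorial : ℂ) * (wf b m ξ ^ (k + 1))⁻¹ -
        (-I) ^ k * (k.factorial : ℂ) * (wf a m ξ ^ (k + 1))⁻¹)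
        = (-I) ^ k * (k.factorial : ℂ) * ((wf b m ξ ^ (k + 1))⁻¹ - (wf a m ξ ^ (k + 1))⁻¹) by ring]
    rw [norm_mul, norm_mul]
    simp
  rw [this]
  calc (k.factorial : ℝ) * ‖(wf b m ξ ^ (k + 1))⁻¹ - (wf a m ξ ^ (k + 1))⁻¹‖
      ≤ (k.factorial : ℝ) * ((k + 1) * |a - b| / M ^ (k + 1 + 1)) := by
        apply mul_le_mul_of_nonneg_left key (by positivity)
    _ = (k.factorial : ℝ) * (k + 1) * |a - b| * (M ^ (k + 2))⁻¹ := by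
        rw [div_eq_mul_inv]; ring_nf
  
/-- Telescoping tail bound. -/
lemma sum_tail_le (k : ℕ) {u : ℝ} (hu : 1 ≤ u) (n : ℕ) :
    ∑ m ∈ Finset.range n, ((((m : ℝ) + 1 + u)) ^ (k + 2))⁻¹ ≤ (u ^ (k + 1))⁻¹ := by
  have hu0 : 0 < u := lt_of_lt_of_le one_pos hu
  have hterm : ∀ m : ℕ, ((((m : ℝ) + 1 + u)) ^ (k + 2))⁻¹
      ≤ (u ^ k)⁻¹ * (((m : ℝ) + u)⁻¹ - (((m : ℝ) + 1 + u))⁻¹) := by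
    intro m
    have hm : (0:ℝ) ≤ m := Nat.cast_nonneg m
    have hmu : (0:ℝ) < (m : ℝ) + u := by linarith
    have hmu1 : (0:ℝ) < (m : ℝ) + 1 + u := by linarith
    have heq : ((m : ℝ) + u)⁻¹ - (((m : ℝ) + 1 + u))⁻¹
        = (((m : ℝ) + u) * ((m : ℝ) + 1 + u))⁻¹ := by
      field_simp
      ring
    rw [heq]
    have hsplit : (((m : ℝ) + 1 + u)) ^ (k + 2) = ((m : ℝ) + 1 + u) ^ k * ((m : ℝ) + 1 + u) ^ 2 := by
      ring
    rw [hsplit, mul_inv]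
    apply mul_le_mul
    · apply inv_anti₀ (by positivity)
      apply pow_le_pow_left₀ (le_of_lt hu0)
      linarith
    · apply inv_anti₀ (by positivity)
      nlinarith
    · positivity
    · positivity
  calc ∑ m ∈ Finset.range n, ((((m : ℝ) + 1 + u)) ^ (k + 2))⁻¹
      ≤ ∑ m ∈ Finset.range n, (u ^ k)⁻¹ * (((m : ℝ) + u)⁻¹ - (((m : ℝ) + 1 + u))⁻¹) :=
        Finset.sum_le_sum fun m _ => hterm m
    _ = (u ^ k)⁻¹ * ∑ m ∈ Finset.range n, ((fun i : ℕ => ((i : ℝ) + u)⁻¹) m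
          - (fun i : ℕ => ((i : ℝ) + u)⁻¹) (m + 1)) := by
        rw [Finset.mul_sum]
        congr 1
        funext m
        push_cast
        ring_nf
    _ = (u ^ k)⁻¹ * (((0 : ℝ) + u)⁻¹ - ((n : ℝ) + u)⁻¹) := by
        rw [Finset.sum_range_sub' (fun i : ℕ => ((i : ℝ) + u)⁻¹) n]
        norm_num
    _ ≤ (u ^ k)⁻¹ * u⁻¹ := by
        apply mul_le_mul_of_nonneg_left _ (by positivity)
        have hn : (0:ℝ) < (n : ℝ) + u := by
          have : (0:ℝ) ≤ n := Nat.cast_nonneg n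
          linarith
        have : (0:ℝ) ≤ ((n : ℝ) + u)⁻¹ := by positivity
        simp only [zero_add]
        linarith
    _ = (u ^ (k + 1))⁻¹ := by rw [pow_succ, mul_inv]


lemma summable_aux (k : ℕ) : Summable (fun m : ℕ => ((((m : ℝ) + 2)) ^ (k + 2))⁻¹) := by
  have h0 : Summable (fun n : ℕ => ((n : ℝ) ^ 2)⁻¹) := by
    have := Real.summable_one_div_nat_pow.mpr (show 1 < 2 by norm_num)
    simpa [one_div] using this
  have h2 : Summable (fun m : ℕ => (((m : ℝ) + 2) ^ 2)⁻¹) := by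
    have := (summable_nat_add_iff 2).mpr h0
    refine this.congr fun m => ?_
    push_cast
    ring
  refine Summable.of_nonneg_of_le (fun m => by positivity) (fun m => ?_) h2
  have hm2 : (1:ℝ) ≤ (m : ℝ) + 2 := by
    have : (0:ℝ) ≤ m := Nat.cast_nonneg m
    linarith
  apply inv_anti₀ (by positivity)
  exact pow_le_pow_right₀ hm2 (by omega)

end GammaSym

open GammaSym

/-- For real `a, b > 0`, the function
`t(ξ) = i · Σ_{m≥0} (a - b)/((m + a + iξ)(m + b + iξ))` is smooth on `ℝ` and is a symbol of
order `-1`: for every `k ∈ ℕ` there is `C_k > 0` with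
`|t⁽ᵏ⁾(ξ)| ≤ C_k (1 + ξ²)^(-(1+k)/2)` for all `ξ ∈ ℝ`. -/
theorem gamma_log_deriv_symbol (a b : ℝ) (ha : 0 < a) (hb : 0 < b)
    (t : ℝ → ℂ)
    (ht : ∀ ξ : ℝ, t ξ =
      Complex.I * ∑' m : ℕ, ((a : ℂ) - (b : ℂ)) /
        (((m : ℂ) + a + ξ * Complex.I) * ((m : ℂ) + b + ξ * Complex.I))) :
    ContDiff ℝ (⊤ : ℕ∞) t ∧
    ∀ k : ℕ, ∃ C : ℝ, 0 < C ∧ ∀ ξ : ℝ,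
      ‖iteratedDeriv k t ξ‖ ≤ C * (1 + ξ ^ 2) ^ (-(1 + (k : ℝ)) / 2) := by
  set c₁ : ℝ := min (min a b) 1 with hc₁def
  have hc₁ : 0 < c₁ := by
    simp only [hc₁def, lt_min_iff]
    exact ⟨⟨ha, hb⟩, one_pos⟩
  have hc₁1 : c₁ ≤ 1 := min_le_right _ _
  have hca : c₁ ≤ a := le_trans (min_le_left _ _) (min_le_left _ _)
  have hcb : c₁ ≤ b := le_trans (min_le_left _ _) (min_le_right _ _)
  -- the series representation via partial fractions
  have htG : t = fun ξ => ∑' m : ℕ, Gf a b m 0 ξ := by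
    funext ξ
    rw [ht ξ, ← tsum_mul_left]
    congr 1
    funext m
    have hwa : wf a m ξ ≠ 0 := wf_ne_zero ha m ξ
    have hwb : wf b m ξ ≠ 0 := wf_ne_zero hb m ξ
    show Complex.I * (((a : ℂ) - b) / (wf a m ξ * wf b m ξ)) = Gf a b m 0 ξ
    rw [Gf]
    congr 1
    simp only [Ff, pow_zero, zero_add, pow_one, Nat.factorial_zero, Nat.cast_one, one_mul]
    rw [inv_sub_inv hwb hwa]
    rw [show wf a m ξ - wf b m ξ = (a : ℂ) - b by simp only [wf]; ring]
    rw [mul_comm (wf b m ξ) (wf a m ξ)]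
  -- uniform summable bounds on all derivatives
  set v : ℕ → ℕ → ℝ := fun k m =>
    (k.factorial : ℝ) * (k + 1) * |a - b| * ((c₁ / 5 * ((m : ℝ) + 2)) ^ (k + 2))⁻¹ with hvdef
  have hu1 : ∀ ξ : ℝ, 1 ≤ Real.sqrt (1 + ξ ^ 2) := by
    intro ξ
    have h := Real.sqrt_le_sqrt (show (1:ℝ) ≤ 1 + ξ ^ 2 by nlinarith [sq_nonneg ξ])
    rwa [Real.sqrt_one] at h
  have hGv : ∀ k m (ξ : ℝ), ‖Gf a b m k ξ‖ ≤ v k m := by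
    intro k m ξ
    refine le_trans (norm_Gf_le hc₁ hc₁1 hca hcb m k ξ) ?_
    have h1 : c₁ / 5 * ((m : ℝ) + 2) ≤ c₁ / 5 * ((m : ℝ) + 1 + Real.sqrt (1 + ξ ^ 2)) := by
      have := hu1 ξ
      have : (m : ℝ) + 2 ≤ (m : ℝ) + 1 + Real.sqrt (1 + ξ ^ 2) := by linarith
      exact mul_le_mul_of_nonneg_left this (by positivity)
    have h2 : ((c₁ / 5 * ((m : ℝ) + 1 + Real.sqrt (1 + ξ ^ 2))) ^ (k + 2))⁻¹
        ≤ ((c₁ / 5 * ((m : ℝ) + 2)) ^ (k + 2))⁻¹ := by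
      apply inv_anti₀ (by positivity)
      exact pow_le_pow_left₀ (by positivity) h1 _
    exact mul_le_mul_of_nonneg_left h2 (by positivity)
  have hfd : ∀ (k : ℕ) (m : ℕ) (ξ : ℝ), ‖iteratedFDeriv ℝ k (Gf a b m 0) ξ‖ ≤ v k m := by
    intro k m ξ
    rw [norm_iteratedFDeriv_eq_norm_iteratedDeriv, iteratedDeriv_Gf ha hb]
    exact hGv k m ξ
  have hv : ∀ k : ℕ, Summable (v k) := by
    intro k
    have : v k = fun m : ℕ => ((k.factorial : ℝ) * (k + 1) * |a - b| * ((c₁ / 5) ^ (k + 2))⁻¹)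
        * ((((m : ℝ) + 2)) ^ (k + 2))⁻¹ := by
      funext m
      simp only [hvdef]
      rw [mul_pow, mul_inv]
      ring
    rw [this]
    exact (summable_aux k).mul_left _
  -- the complex extension
  set Tc : ℂ → ℂ := fun z => ∑' m : ℕ, Complex.I *
    ((((m : ℂ) + b + z * Complex.I))⁻¹ - (((m : ℂ) + a + z * Complex.I))⁻¹) with hTc
  have htTc : t = fun ξ : ℝ => Tc (ξ : ℂ) := by
    rw [htG]
    funext ξ
    simp only [hTc]
    congr 1
    funext m
    simp only [Gf, Ff, pow_zero, zero_add, pow_one, Nat.factorial_zero, Nat.cast_one, one_mul]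
    rfl
  -- smoothness (indeed analyticity)
  have hsmooth : ContDiff ℝ (⊤ : ℕ∞) t := by
    rw [contDiff_iff_contDiffAt]
    intro ξ₀
    have hball : ∀ (c : ℝ), c₁ ≤ c → ∀ (m : ℕ), ∀ z ∈ Metric.ball (ξ₀ : ℂ) (c₁ / 2),
        (m : ℝ) + c₁ / 2 ≤ ‖(m : ℂ) + c + z * Complex.I‖ := by
      intro c hc m z hz
      have him : |z.im| < c₁ / 2 := by
        have h1 : |(z - (ξ₀ : ℂ)).im| ≤ ‖z - (ξ₀ : ℂ)‖ := Complex.abs_im_le_norm _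
        have h2 : ‖z - (ξ₀ : ℂ)‖ < c₁ / 2 := by
          rw [Metric.mem_ball, Complex.dist_eq] at hz
          exact hz
        have h3 : (z - (ξ₀ : ℂ)).im = z.im := by simp
        rw [h3] at h1
        linarith
      have hre : ((m : ℂ) + c + z * Complex.I).re = (m : ℝ) + c - z.im := by
        simp [Complex.add_re, Complex.mul_re]
        ring
      have h4 := Complex.abs_re_le_norm ((m : ℂ) + c + z * Complex.I)
      rw [hre] at h4
      have h5 : (m : ℝ) + c₁ / 2 ≤ |(m : ℝ) + c - z.im| := by
        have hm : (0:ℝ) ≤ m := Nat.cast_nonneg m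
        have habs := abs_le.mp (le_of_lt him)
        have : (m : ℝ) + c₁ / 2 ≤ (m : ℝ) + c - z.im := by linarith [habs.2]
        exact le_trans this (le_abs_self _)
      exact le_trans h5 h4
    have hne : ∀ (c : ℝ), c₁ ≤ c → ∀ (m : ℕ), ∀ z ∈ Metric.ball (ξ₀ : ℂ) (c₁ / 2),
        (m : ℂ) + c + z * Complex.I ≠ 0 := by
      intro c hc m z hz h0
      have := hball c hc m z hz
      rw [h0] at this
      simp at this
      have hm : (0:ℝ) ≤ m := Nat.cast_nonneg m
      linarith
    have hdiff : DifferentiableOn ℂ Tc (Metric.ball (ξ₀ : ℂ) (c₁ / 2)) := by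
      apply differentiableOn_tsum_of_summable_norm
        (u := fun m : ℕ => |a - b| * ((c₁ / 4 * ((m : ℝ) + 2)) ^ 2)⁻¹)
      · have : (fun m : ℕ => |a - b| * ((c₁ / 4 * ((m : ℝ) + 2)) ^ 2)⁻¹)
            = fun m : ℕ => (|a - b| * ((c₁ / 4) ^ 2)⁻¹) * ((((m : ℝ) + 2)) ^ (0 + 2))⁻¹ := by
          funext m
          rw [mul_pow, mul_inv]
          norm_num
          ring
        rw [this]
        exact (summable_aux 0).mul_left _
      · intro m
        have hda : DifferentiableOn ℂ (fun z : ℂ => (m : ℂ) + a + z * Complex.I)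
            (Metric.ball (ξ₀ : ℂ) (c₁ / 2)) :=
          (((differentiable_id.mul_const Complex.I).const_add _)).differentiableOn
        have hdb : DifferentiableOn ℂ (fun z : ℂ => (m : ℂ) + b + z * Complex.I)
            (Metric.ball (ξ₀ : ℂ) (c₁ / 2)) :=
          (((differentiable_id.mul_const Complex.I).const_add _)).differentiableOn
        exact (((hdb.inv (hne b hcb m)).sub (hda.inv (hne a hca m))).const_mul _)
      · exact Metric.isOpen_ball
      · intro m z hz
        have hza := hne a hca m z hz
        have hzb := hne b hcb m z hz
        have hkey : Complex.I * ((((m : ℂ) + b + z * Complex.I))⁻¹ - (((m : ℂ) + a + z * Complex.I))⁻¹)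
            = Complex.I * (((a : ℂ) - b) / (((m : ℂ) + a + z * Complex.I) * ((m : ℂ) + b + z * Complex.I))) := by
          rw [inv_sub_inv hzb hza]
          congr 1
          rw [mul_comm ((m : ℂ) + b + z * Complex.I) ((m : ℂ) + a + z * Complex.I)]
          congr 1
          ring
        rw [hkey, norm_mul, Complex.norm_I, one_mul, norm_div, norm_mul]
        have hnab : ‖(a : ℂ) - b‖ = |a - b| := by
          rw [← Complex.ofReal_sub, Complex.norm_real, Real.norm_eq_abs]
        rw [hnab]
        have hmc : c₁ / 4 * ((m : ℝ) + 2) ≤ (m : ℝ) + c₁ / 2 := by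
          have hm : (0:ℝ) ≤ m := Nat.cast_nonneg m
          nlinarith
        have hmc0 : (0:ℝ) < c₁ / 4 * ((m : ℝ) + 2) := by positivity
        have h1 := le_trans hmc (hball a hca m z hz)
        have h2 := le_trans hmc (hball b hcb m z hz)
        rw [div_eq_mul_inv]
        apply mul_le_mul_of_nonneg_left _ (abs_nonneg _)
        rw [sq, mul_inv, mul_inv]
        exact mul_le_mul (inv_anti₀ hmc0 h1) (inv_anti₀ hmc0 h2)
          (by positivity) (by positivity)
    have hanal : AnalyticAt ℂ Tc (ξ₀ : ℂ) :=
      (hdiff.analyticOnNhd Metric.isOpen_ball) (ξ₀ : ℂ)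
        (Metric.mem_ball_self (by positivity))
    have : AnalyticAt ℝ (fun ξ : ℝ => Tc (ξ : ℂ)) ξ₀ :=
      (hanal.restrictScalars).comp (Complex.ofRealCLM.analyticAt ξ₀)
    rw [htTc]
    exact this.contDiffAt
  refine ⟨hsmooth, ?_⟩
  intro k
  set K : ℝ := (k.factorial : ℝ) * (k + 1) * |a - b| * ((c₁ / 5) ^ (k + 2))⁻¹ with hK
  have hK0 : 0 ≤ K := by positivity
  refine ⟨K + 1, by positivity, ?_⟩
  intro ξ
  set u : ℝ := Real.sqrt (1 + ξ ^ 2) with hu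
  have hu' : 1 ≤ u := hu1 ξ
  have hupos : 0 < u := lt_of_lt_of_le one_pos hu'
  -- the iterated derivative of the sum is the sum of the iterated derivatives
  have hsummfd : Summable fun m : ℕ => iteratedFDeriv ℝ k (Gf a b m 0) ξ :=
    Summable.of_norm_bounded (hv k) (fun m => hfd k m ξ)
  have hit : iteratedDeriv k t ξ = ∑' m : ℕ, Gf a b m k ξ := by
    rw [htG]
    rw [iteratedDeriv_eq_iteratedFDeriv]
    rw [iteratedFDeriv_tsum_apply (N := (⊤ : ℕ∞))
      (fun m => (contDiff_Gf ha hb m 0).of_le (by simp)) (fun j _ => hv j)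
      (fun j m ξ' _ => hfd j m ξ') le_top ξ]
    rw [ContinuousMultilinearMap.tsum_eval hsummfd (fun _ : Fin k => (1:ℝ))]
    congr 1
    funext m
    rw [← iteratedDeriv_eq_iteratedFDeriv, iteratedDeriv_Gf ha hb]
  have hsumnorm : Summable fun m : ℕ => ‖Gf a b m k ξ‖ :=
    Summable.of_nonneg_of_le (fun m => norm_nonneg _) (fun m => hGv k m ξ) (hv k)
  have hbound : ∑' m : ℕ, ‖Gf a b m k ξ‖ ≤ K * (u ^ (k + 1))⁻¹ := by
    apply Real.tsum_le_of_sum_range_le (fun m => norm_nonneg _)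
    intro n
    have hstep : ∀ m : ℕ, ‖Gf a b m k ξ‖ ≤ K * ((((m : ℝ) + 1 + u)) ^ (k + 2))⁻¹ := by
      intro m
      refine le_trans (norm_Gf_le hc₁ hc₁1 hca hcb m k ξ) ?_
      rw [hK]
      rw [mul_pow, mul_inv]
      ring_nf
      rfl
    calc ∑ m ∈ Finset.range n, ‖Gf a b m k ξ‖
        ≤ ∑ m ∈ Finset.range n, K * ((((m : ℝ) + 1 + u)) ^ (k + 2))⁻¹ :=
          Finset.sum_le_sum fun m _ => hstep m
      _ = K * ∑ m ∈ Finset.range n, ((((m : ℝ) + 1 + u)) ^ (k + 2))⁻¹ := by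
          rw [Finset.mul_sum]
      _ ≤ K * (u ^ (k + 1))⁻¹ :=
          mul_le_mul_of_nonneg_left (sum_tail_le k hu' n) hK0
  have hrpow : (u ^ (k + 1) : ℝ)⁻¹ = (1 + ξ ^ 2) ^ (-(1 + (k : ℝ)) / 2) := by
    have hx : (0:ℝ) ≤ 1 + ξ ^ 2 := by positivity
    rw [hu, Real.sqrt_eq_rpow, ← Real.rpow_natCast ((1 + ξ ^ 2) ^ ((1:ℝ)/2)) (k + 1),
      ← Real.rpow_mul hx, ← Real.rpow_neg hx]
    congr 1
    push_cast
    ring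
  have hrpow0 : (0:ℝ) ≤ (1 + ξ ^ 2) ^ (-(1 + (k : ℝ)) / 2) :=
    Real.rpow_nonneg (by positivity) _
  calc ‖iteratedDeriv k t ξ‖ = ‖iteratedDeriv k t ξ‖ := rfl
    _ = ‖∑' m : ℕ, Gf a b m k ξ‖ := by rw [hit]
    _ ≤ ∑' m : ℕ, ‖Gf a b m k ξ‖ := norm_tsum_le_tsum_norm hsumnorm
    _ ≤ K * (u ^ (k + 1))⁻¹ := hbound
    _ = K * (1 + ξ ^ 2) ^ (-(1 + (k : ℝ)) / 2) := by rw [hrpow]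
    _ ≤ (K + 1) * (1 + ξ ^ 2) ^ (-(1 + (k : ℝ)) / 2) :=
        mul_le_mul_of_nonneg_right (by linarith) hrpow0
end
end

section
/- Let a, b > 0 be real numbers. Then the function s(ξ) = Γ(a + iξ)/Γ(b + iξ) is elliptic of order a − b: there exist constants R > 0 and C > 0 such that for all ξ ∈ ℝ with |ξ| ≥ R one has |Γ(a + iξ)/Γ(b + iξ)| ≥ C (1 + ξ²)^{(a−b)/2}. -/
/-!
Write `F(x) = log (x² + ξ²)` and `m = min a b`. Euler's limit
`Γ(s) = lim n^s n! / ∏_{k ≤ n} (s + k)` gives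
`2 log |Γ(a + iξ) / Γ(b + iξ)| = lim (2 (a - b) log n - ∑_{k ≤ n} (F (a + k) - F (b + k)))`.
By a second-order Taylor expansion of `F` at `m + k`, the `k`-th summand differs from
`(a - b) (F (m + k + 1) - F (m + k))` by `O(1 / (m + k)²)`, uniformly in `ξ`. The latter sum
telescopes, so `2 log |Γ(a + iξ) / Γ(b + iξ)| ≥ (a - b) F m - K` with `K` independent of `ξ`,
and `m² + ξ²` lies between `m²` and `1` times `1 + ξ²`.
-/

open Real Filter Topology
open scoped Nat

section LogSqAddSq

variable {ξ : ℝ}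

lemma abs_two_mul_div_sq_add_sq_sub_le {t v : ℝ} (ht : 0 < t) (hv : t ≤ v) :
    |2 * v / (v ^ 2 + ξ ^ 2) - 2 * t / (t ^ 2 + ξ ^ 2)| ≤ 2 * (v - t) / (t ^ 2 + ξ ^ 2) := by
  have hv2 : 0 < v ^ 2 + ξ ^ 2 := by have := ht.trans_le hv; positivity
  have ht2 : 0 < t ^ 2 + ξ ^ 2 := by positivity
  have hvt : 0 ≤ v - t := sub_nonneg.2 hv
  have hsplit : 2 * v / (v ^ 2 + ξ ^ 2) - 2 * t / (t ^ 2 + ξ ^ 2)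
      = 2 * (v - t) / (t ^ 2 + ξ ^ 2) * ((ξ ^ 2 - v * t) / (v ^ 2 + ξ ^ 2)) := by
    field_simp; ring
  have hfactor : |(ξ ^ 2 - v * t) / (v ^ 2 + ξ ^ 2)| ≤ 1 := by
    rw [abs_div, abs_of_pos hv2, div_le_one hv2, abs_le]
    constructor <;> nlinarith
  rw [hsplit, abs_mul, abs_of_nonneg (by positivity)]
  exact mul_le_of_le_one_right (by positivity) hfactor

lemma abs_log_sq_add_sq_sub_sub_le {t y : ℝ} (ht : 0 < t) (hy : t ≤ y) :
    |log (y ^ 2 + ξ ^ 2) - log (t ^ 2 + ξ ^ 2) - (y - t) * (2 * t / (t ^ 2 + ξ ^ 2))|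
      ≤ 2 * (y - t) ^ 2 / (t ^ 2 + ξ ^ 2) := by
  set g : ℝ → ℝ := fun v ↦ log (v ^ 2 + ξ ^ 2) - (v - t) * (2 * t / (t ^ 2 + ξ ^ 2))
  have hg : ∀ v ∈ Set.Icc t y,
      HasDerivWithinAt g (2 * v / (v ^ 2 + ξ ^ 2) - 2 * t / (t ^ 2 + ξ ^ 2)) (Set.Icc t y) v := by
    intro v hv
    have hv2 : v ^ 2 + ξ ^ 2 ≠ 0 := by have := ht.trans_le hv.1; positivity
    have hlog := ((hasDerivAt_pow 2 v).add_const (ξ ^ 2)).log hv2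
    have hlin := ((hasDerivAt_id v).sub_const t).mul_const (2 * t / (t ^ 2 + ξ ^ 2))
    exact ((hlog.sub hlin).congr_deriv (by norm_num)).hasDerivWithinAt
  have hbound : ∀ v ∈ Set.Ico t y,
      ‖2 * v / (v ^ 2 + ξ ^ 2) - 2 * t / (t ^ 2 + ξ ^ 2)‖ ≤ 2 * (y - t) / (t ^ 2 + ξ ^ 2) :=
    fun v hv ↦ (abs_two_mul_div_sq_add_sq_sub_le ht hv.1).trans (by gcongr; exact hv.2.le)
  have := norm_image_sub_le_of_norm_deriv_le_segment' hg hbound y ⟨hy, le_rfl⟩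
  simp only [g, sub_self, zero_mul, sub_zero, Real.norm_eq_abs] at this
  convert this using 2 <;> ring

lemma abs_log_sq_add_sq_sub_sub_mul_le {t d p q : ℝ} (ht : 0 < t)
    (hp : p ∈ Set.Icc t (t + d)) (hq : q ∈ Set.Icc t (t + d)) :
    |log (p ^ 2 + ξ ^ 2) - log (q ^ 2 + ξ ^ 2)
        - (p - q) * (log ((t + 1) ^ 2 + ξ ^ 2) - log (t ^ 2 + ξ ^ 2))|
      ≤ 2 * d * (2 * d + 1) / (t ^ 2 + ξ ^ 2) := by
  set D := t ^ 2 + ξ ^ 2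
  set G : ℝ → ℝ := fun y ↦ log (y ^ 2 + ξ ^ 2) - log D - (y - t) * (2 * t / D)
  have hD : 0 < D := by positivity
  have hd : 0 ≤ d := by linarith [hp.1, hp.2]
  have hG : ∀ y ∈ Set.Icc t (t + d), |G y| ≤ 2 * d ^ 2 / D := fun y hy ↦
    (abs_log_sq_add_sq_sub_sub_le ht hy.1).trans <| by
      gcongr
      · linarith [hy.1]
      · linarith [hy.2]
  have hG1 : |G (t + 1)| ≤ 2 / D := by
    simpa [G] using abs_log_sq_add_sq_sub_sub_le (ξ := ξ) ht (le_add_of_nonneg_right zero_le_one)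
  have hpq : |p - q| ≤ d := abs_sub_le_iff.2 ⟨by linarith [hp.2, hq.1], by linarith [hp.1, hq.2]⟩
  calc _ = |G p - G q - (p - q) * G (t + 1)| := by simp only [G]; ring_nf
    _ ≤ |G p| + |G q| + |p - q| * |G (t + 1)| := by
        rw [← abs_mul]
        exact (abs_sub _ _).trans (add_le_add_left (abs_sub _ _) _)
    _ ≤ 2 * d ^ 2 / D + 2 * d ^ 2 / D + d * (2 / D) := by
        gcongr
        exacts [hG p hp, hG q hq]
    _ = 2 * d * (2 * d + 1) / D := by ring

lemma abs_sum_log_sq_add_sq_sub_sub_le {a b : ℝ} (ha : 0 < a) (hb : 0 < b) (N : ℕ) :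
    |∑ k ∈ Finset.range N, (log ((a + k) ^ 2 + ξ ^ 2) - log ((b + k) ^ 2 + ξ ^ 2))
        - (a - b) * (log ((min a b + N) ^ 2 + ξ ^ 2) - log (min a b ^ 2 + ξ ^ 2))|
      ≤ 2 * |a - b| * (2 * |a - b| + 1) * ∑' k : ℕ, 1 / |k + min a b| ^ (2 : ℝ) := by
  have hmax : max a b = min a b + |a - b| := by linarith [max_sub_min_eq_abs' a b]
  set m := min a b
  set d := |a - b|
  set f : ℕ → ℝ := fun k ↦ log ((m + k) ^ 2 + ξ ^ 2)
  have hm : 0 < m := lt_min ha hb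
  have hshift : ∀ x, m ≤ x → x ≤ max a b → ∀ k : ℕ, x + k ∈ Set.Icc (m + k) (m + k + d) := by
    intro x hmx hxM k
    constructor <;> linarith
  have htel : (a - b) * (log ((m + N) ^ 2 + ξ ^ 2) - log (m ^ 2 + ξ ^ 2))
      = ∑ k ∈ Finset.range N, (a - b) * (f (k + 1) - f k) := by
    rw [← Finset.mul_sum, Finset.sum_range_sub]
    simp [f]
  rw [htel, ← Finset.sum_sub_distrib]
  calc _ ≤ ∑ k ∈ Finset.range N,
        |log ((a + k) ^ 2 + ξ ^ 2) - log ((b + k) ^ 2 + ξ ^ 2) - (a - b) * (f (k + 1) - f k)| :=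
        Finset.abs_sum_le_sum_abs _ _
    _ ≤ ∑ k ∈ Finset.range N, 2 * d * (2 * d + 1) * (1 / |k + m| ^ (2 : ℝ)) := by
        gcongr with k
        have hk := abs_log_sq_add_sq_sub_sub_mul_le (ξ := ξ) (by positivity : 0 < m + k)
          (hshift a (min_le_left a b) (le_max_left a b) k)
          (hshift b (min_le_right a b) (le_max_right a b) k)
        rw [add_sub_add_right_eq_sub] at hk
        simp only [f, Nat.cast_succ, ← add_assoc]
        refine hk.trans ?_
        rw [mul_one_div, Real.rpow_two, abs_of_pos (by positivity), add_comm (k : ℝ)]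
        gcongr
        nlinarith
    _ ≤ 2 * d * (2 * d + 1) * ∑' k : ℕ, 1 / |k + m| ^ (2 : ℝ) := by
        rw [← Finset.mul_sum]
        gcongr
        exact Summable.sum_le_tsum _ (fun _ _ ↦ by positivity)
          ((Real.summable_one_div_nat_add_rpow m 2).2 one_lt_two)

end LogSqAddSq

lemma norm_GammaSeq_ofReal_add_mul_I (x ξ : ℝ) {n : ℕ} (hn : n ≠ 0) :
    ‖Complex.GammaSeq (x + ξ * Complex.I) n‖
      = n ^ x * n ! / ∏ k ∈ Finset.range (n + 1), √((x + k) ^ 2 + ξ ^ 2) := by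
  rw [Complex.GammaSeq, norm_div, norm_mul, norm_prod,
    Complex.norm_natCast_cpow_of_pos (Nat.pos_of_ne_zero hn), Complex.norm_natCast]
  congr 1
  · simp
  · refine Finset.prod_congr rfl fun k _ ↦ ?_
    rw [← Complex.norm_add_mul_I]
    push_cast
    ring_nf

lemma log_norm_GammaSeq_ofReal_add_mul_I {x : ℝ} (hx : 0 < x) (ξ : ℝ) {n : ℕ} (hn : n ≠ 0) :
    log ‖Complex.GammaSeq (x + ξ * Complex.I) n‖
      = x * log n + log n ! - (∑ k ∈ Finset.range (n + 1), log ((x + k) ^ 2 + ξ ^ 2)) / 2 := by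
  have hpos : ∀ k : ℕ, 0 < (x + k) ^ 2 + ξ ^ 2 := fun k ↦ by positivity
  rw [norm_GammaSeq_ofReal_add_mul_I x ξ hn, log_div (by positivity)
    (Finset.prod_pos fun k _ ↦ sqrt_pos.2 (hpos k)).ne', log_mul (by positivity) (by positivity),
    log_rpow (by positivity), log_prod fun k _ ↦ (sqrt_pos.2 (hpos k)).ne', Finset.sum_div]
  simp only [log_sqrt (hpos _).le]

lemma two_mul_log_norm_GammaSeq_div {a b : ℝ} (ha : 0 < a) (hb : 0 < b) (ξ : ℝ) {n : ℕ}
    (hn : n ≠ 0) :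
    2 * log ‖Complex.GammaSeq (a + ξ * Complex.I) n / Complex.GammaSeq (b + ξ * Complex.I) n‖
      = 2 * (a - b) * log n
        - ∑ k ∈ Finset.range (n + 1), (log ((a + k) ^ 2 + ξ ^ 2) - log ((b + k) ^ 2 + ξ ^ 2)) := by
  have hne : ∀ {x : ℝ}, 0 < x → ‖Complex.GammaSeq (x + ξ * Complex.I) n‖ ≠ 0 := fun hx ↦ by
    rw [norm_GammaSeq_ofReal_add_mul_I _ ξ hn]
    exact (div_pos (by positivity) (Finset.prod_pos fun k _ ↦ by positivity)).ne'
  rw [norm_div, log_div (hne ha) (hne hb), log_norm_GammaSeq_ofReal_add_mul_I ha ξ hn,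
    log_norm_GammaSeq_ofReal_add_mul_I hb ξ hn, Finset.sum_sub_distrib]
  ring

lemma tendsto_log_add_sq_add_sq_sub_two_mul_log (c ξ : ℝ) :
    Tendsto (fun x : ℝ ↦ log ((c + x) ^ 2 + ξ ^ 2) - 2 * log x) atTop (𝓝 0) := by
  have hinv := tendsto_inv_atTop_zero (𝕜 := ℝ)
  have hratio : Tendsto (fun x : ℝ ↦ (c * x⁻¹ + 1) ^ 2 + (ξ * x⁻¹) ^ 2) atTop (𝓝 1) := by
    simpa using (((hinv.const_mul c).add_const 1).pow 2).add ((hinv.const_mul ξ).pow 2)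
  have hlog := (continuousAt_log one_ne_zero).tendsto.comp hratio
  rw [log_one] at hlog
  refine hlog.congr' ?_
  filter_upwards [eventually_gt_atTop |c|] with x hx
  have hx0 : 0 < x := (abs_nonneg c).trans_lt hx
  have hcx : 0 < c + x := by linarith [neg_abs_le c]
  have hsplit : (c * x⁻¹ + 1) ^ 2 + (ξ * x⁻¹) ^ 2 = ((c + x) ^ 2 + ξ ^ 2) / x ^ 2 := by
    field_simp
  rw [Function.comp_apply, hsplit, log_div (by positivity) (by positivity), log_pow]
  push_cast
  ring

lemma abs_log_add_sub_log_one_add_le {c s : ℝ} (hc : 0 < c) (hs : 0 ≤ s) :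
    |log (c + s) - log (1 + s)| ≤ |log c| := by
  have hcs : log (c + s) - log (1 + s) = log ((c + s) / (1 + s)) :=
    (log_div (by positivity) (by positivity)).symm
  rw [hcs]
  rcases le_total c 1 with hc1 | hc1
  · have hlo : c ≤ (c + s) / (1 + s) := by rw [le_div_iff₀ (by positivity)]; nlinarith
    have hhi : (c + s) / (1 + s) ≤ 1 := by rw [div_le_one (by positivity)]; linarith
    rw [abs_of_nonpos (log_nonpos (by positivity) hhi), abs_of_nonpos (log_nonpos hc.le hc1)]
    exact neg_le_neg (log_le_log hc hlo)
  · have hlo : 1 ≤ (c + s) / (1 + s) := by rw [le_div_iff₀ (by positivity)]; linarith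
    have hhi : (c + s) / (1 + s) ≤ c := by rw [div_le_iff₀ (by positivity)]; nlinarith
    rw [abs_of_nonneg (log_nonneg hlo), abs_of_nonneg (log_nonneg hc1)]
    exact log_le_log (by positivity) hhi

lemma Gamma_ofReal_add_mul_I_ne_zero {x : ℝ} (hx : 0 < x) (ξ : ℝ) :
    Complex.Gamma (x + ξ * Complex.I) ≠ 0 :=
  Complex.Gamma_ne_zero_of_re_pos (by simpa using hx)

lemma norm_Gamma_div_Gamma_pos {a b : ℝ} (ha : 0 < a) (hb : 0 < b) (ξ : ℝ) :
    0 < ‖Complex.Gamma (a + ξ * Complex.I) / Complex.Gamma (b + ξ * Complex.I)‖ :=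
  norm_pos_iff.2 <| div_ne_zero (Gamma_ofReal_add_mul_I_ne_zero ha ξ)
    (Gamma_ofReal_add_mul_I_ne_zero hb ξ)

lemma le_two_mul_log_norm_Gamma_div {a b : ℝ} (ha : 0 < a) (hb : 0 < b) (ξ : ℝ) :
    (a - b) * log (min a b ^ 2 + ξ ^ 2)
        - 2 * |a - b| * (2 * |a - b| + 1) * ∑' k : ℕ, 1 / |k + min a b| ^ (2 : ℝ)
      ≤ 2 * log ‖Complex.Gamma (a + ξ * Complex.I) / Complex.Gamma (b + ξ * Complex.I)‖ := by
  have hseq := (((Complex.GammaSeq_tendsto_Gamma _).div (Complex.GammaSeq_tendsto_Gamma _)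
    (Gamma_ofReal_add_mul_I_ne_zero hb ξ)).norm.log
      (norm_Gamma_div_Gamma_pos ha hb ξ).ne').const_mul 2
  have hcorr := ((tendsto_log_add_sq_add_sq_sub_two_mul_log (min a b + 1) ξ).comp
    tendsto_natCast_atTop_atTop).const_mul (a - b)
  have hlim : Tendsto (fun n : ℕ ↦
      2 * log ‖Complex.GammaSeq (a + ξ * Complex.I) n / Complex.GammaSeq (b + ξ * Complex.I) n‖
        + (a - b) * (log ((min a b + 1 + n) ^ 2 + ξ ^ 2) - 2 * log n)) atTop
      (𝓝 (2 * log ‖Complex.Gamma (a + ξ * Complex.I) / Complex.Gamma (b + ξ * Complex.I)‖)) := by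
    simpa using hseq.add hcorr
  refine ge_of_tendsto hlim ?_
  filter_upwards [eventually_ne_atTop 0] with n hn
  have hsum := abs_sum_log_sq_add_sq_sub_sub_le (ξ := ξ) ha hb (n + 1)
  rw [show min a b + ((n + 1 : ℕ) : ℝ) = min a b + 1 + n by push_cast; ring] at hsum
  rw [two_mul_log_norm_GammaSeq_div ha hb ξ hn]
  linarith [(abs_le.1 hsum).2]

/-- For real `a, b > 0`, the function `s(ξ) = Γ(a + iξ)/Γ(b + iξ)` is elliptic
of order `a - b`: there exist `R > 0` and `C > 0` such that for all `ξ ∈ ℝ` with `|ξ| ≥ R`,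
`|Γ(a + iξ)/Γ(b + iξ)| ≥ C (1 + ξ²)^((a-b)/2)`. -/
theorem gamma_ratio_elliptic (a b : ℝ) (ha : 0 < a) (hb : 0 < b) :
    ∃ R : ℝ, 0 < R ∧ ∃ C : ℝ, 0 < C ∧ ∀ ξ : ℝ, R ≤ |ξ| →
      C * (1 + ξ ^ 2) ^ ((a - b) / 2) ≤
        ‖Complex.Gamma ((a : ℂ) + ξ * Complex.I) /
          Complex.Gamma ((b : ℂ) + ξ * Complex.I)‖ := by
  set K := 2 * |a - b| * (2 * |a - b| + 1) * ∑' k : ℕ, 1 / |k + min a b| ^ (2 : ℝ)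
    + |a - b| * |log (min a b ^ 2)|
  refine ⟨1, one_pos, exp (-K / 2), exp_pos _, fun ξ _ ↦ ?_⟩
  have hlow := le_two_mul_log_norm_Gamma_div ha hb ξ
  have hcmp : |(a - b) * (log (min a b ^ 2 + ξ ^ 2) - log (1 + ξ ^ 2))|
      ≤ |a - b| * |log (min a b ^ 2)| := by
    rw [abs_mul]
    exact mul_le_mul_of_nonneg_left
      (abs_log_add_sub_log_one_add_le (by positivity) (sq_nonneg ξ)) (abs_nonneg _)
  calc exp (-K / 2) * (1 + ξ ^ 2) ^ ((a - b) / 2)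
      = exp (((a - b) * log (1 + ξ ^ 2) - K) / 2) := by
        rw [rpow_def_of_pos (by positivity), ← exp_add]
        ring_nf
    _ ≤ exp (log ‖Complex.Gamma (a + ξ * Complex.I) / Complex.Gamma (b + ξ * Complex.I)‖) :=
        exp_le_exp.2 (by linarith [neg_abs_le ((a - b) * (log (min a b ^ 2 + ξ ^ 2)
          - log (1 + ξ ^ 2)))])
    _ = _ := exp_log (norm_Gamma_div_Gamma_pos ha hb ξ)
end
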